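/- Every finite group G admits a free continuous action on a finite-dimensional torus: there exist n ∈ ℕ and a group homomorphism from G to the group of self-homeomorphisms of the torus T = (Fin n → AddCircle (1 : ℝ)) whose associated action is free (i.e., if g • t = t for some t ∈ T then g = 1). -/
import Mathlib


/-- The group of self-homeomorphisms of a topological space, with composition as
multiplication: `(f * g) x = f (g x)`. -/
instance homeomorphGroup (X : Type*) [TopologicalSpace X] : Group (X ≃ₜ X) where
  mul f g := g.trans f
  one := Homeomorph.refl X
  inv := Homeomorph.symm
  mul_assoc f g h := Homeomorph.ext fun _ => rfl
  one_mul f := Homeomorph.ext fun _ => rfl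
  mul_one f := Homeomorph.ext fun _ => rfl
  inv_mul_cancel f := Homeomorph.ext fun x => f.symm_apply_apply x

section Aux

lemma homeo_mul_apply {X : Type*} [TopologicalSpace X] (f g : X ≃ₜ X) (x : X) :
    (f * g) x = f (g x) := rfl

/-- Reindexing homeomorphism of product spaces. -/
def reindexHomeo {I I' A : Type*} [TopologicalSpace A] (e : I ≃ I') :
    (I → A) ≃ₜ (I' → A) where
  toFun t := t ∘ e.symm
  invFun t := t ∘ e
  left_inv t := by funext i; simp
  right_inv t := by funext i; simp
  continuous_toFun := continuous_pi fun i => continuous_apply _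
  continuous_invFun := continuous_pi fun i => continuous_apply _

@[simp] lemma reindexHomeo_apply {I I' A : Type*} [TopologicalSpace A] (e : I ≃ I')
    (t : I → A) (i' : I') : reindexHomeo e t i' = t (e.symm i') := rfl

/-- Conjugating a homomorphism into homeomorphisms by a fixed homeomorphism. -/
def conjHom {X Y : Type*} [TopologicalSpace X] [TopologicalSpace Y] (H : X ≃ₜ Y) :
    (X ≃ₜ X) →* (Y ≃ₜ Y) :=
  MonoidHom.mk' (fun f => (H.symm.trans f).trans H) (fun f g => by
    apply Homeomorph.ext; intro y
    simp [homeo_mul_apply, Homeomorph.trans_apply])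

@[simp] lemma conjHom_apply {X Y : Type*} [TopologicalSpace X] [TopologicalSpace Y]
    (H : X ≃ₜ Y) (f : X ≃ₜ X) (y : Y) : conjHom H f y = H (f (H.symm y)) := rfl

variable {G : Type*} [Group G]

lemma int_coe_addCircle_eq_zero (m : ℤ) : ((m : ℝ) : AddCircle (1 : ℝ)) = 0 := by
  rw [AddCircle.coe_eq_zero_iff]
  exact ⟨m, by simp⟩

/-- A "discrete logarithm with values in the circle" for the cyclic group generated
by `g`. -/
noncomputable def chi (g h : G) : AddCircle (1 : ℝ) :=
  letI := Classical.dec (∃ k : ℤ, g ^ k = h)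
  if hh : ∃ k : ℤ, g ^ k = h then (((hh.choose : ℝ) / (orderOf g : ℝ) : ℝ) : AddCircle (1:ℝ))
  else 0

lemma chi_spec (g h : G) (hd : orderOf g ≠ 0) (k : ℤ) (hk : g ^ k = h) :
    chi g h = (((k : ℝ) / (orderOf g : ℝ) : ℝ) : AddCircle (1:ℝ)) := by
  have hh : ∃ k : ℤ, g ^ k = h := ⟨k, hk⟩
  rw [chi, dif_pos hh]
  have h2 : g ^ (hh.choose - k) = 1 := by
    rw [zpow_sub, hh.choose_spec, hk, mul_inv_cancel]
  have hdvd : (orderOf g : ℤ) ∣ hh.choose - k := orderOf_dvd_iff_zpow_eq_one.mpr h2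
  obtain ⟨m, hm⟩ := hdvd
  have hchoose : (hh.choose : ℝ) = k + m * (orderOf g : ℝ) := by
    have : (hh.choose : ℝ) - k = (orderOf g : ℝ) * m := by exact_mod_cast congrArg Int.cast hm
    linarith
  have hdne : (orderOf g : ℝ) ≠ 0 := by exact_mod_cast hd
  rw [hchoose]
  have : ((k : ℝ) + m * (orderOf g : ℝ)) / (orderOf g : ℝ)
      = (k : ℝ) / (orderOf g : ℝ) + (m : ℝ) := by field_simp
  rw [this, AddCircle.coe_add, int_coe_addCircle_eq_zero, add_zero]

lemma chi_mul (g h₁ h₂ : G) (hd : orderOf g ≠ 0)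
    (m₁ : h₁ ∈ Subgroup.zpowers g) (m₂ : h₂ ∈ Subgroup.zpowers g) :
    chi g (h₁ * h₂) = chi g h₁ + chi g h₂ := by
  obtain ⟨k₁, hk₁⟩ := Subgroup.mem_zpowers_iff.mp m₁
  obtain ⟨k₂, hk₂⟩ := Subgroup.mem_zpowers_iff.mp m₂
  rw [chi_spec g h₁ hd k₁ hk₁, chi_spec g h₂ hd k₂ hk₂,
    chi_spec g (h₁ * h₂) hd (k₁ + k₂) (by rw [zpow_add, hk₁, hk₂]), ← AddCircle.coe_add]
  congr 1
  push_cast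
  ring

lemma chi_self (g : G) (hd : 2 ≤ orderOf g) : chi g g ≠ 0 := by
  have hd0 : orderOf g ≠ 0 := by omega
  rw [chi_spec g g hd0 1 (zpow_one g)]
  intro h
  rw [AddCircle.coe_eq_zero_iff] at h
  obtain ⟨n, hn⟩ := h
  have hdR : (2 : ℝ) ≤ (orderOf g : ℝ) := by exact_mod_cast hd
  have hpos : (0 : ℝ) < 1 / (orderOf g : ℝ) := by positivity
  have hlt : 1 / (orderOf g : ℝ) < 1 := by
    rw [div_lt_one (by linarith)]; linarith
  rw [zsmul_eq_mul, mul_one] at hn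
  have h0 : (0:ℝ) < n := by rw [hn]; push_cast; exact hpos
  have h1 : (n:ℝ) < 1 := by rw [hn]; push_cast; exact hlt
  have : (0:ℤ) < n := by exact_mod_cast h0
  have : n < 1 := by exact_mod_cast h1
  omega

end Aux

section Main

variable {G : Type*} [Group G]

/-- The index set of the torus: for every nontrivial `g`, a copy of the coset space
`G ⧸ ⟨g⟩`. -/
abbrev Jt (G : Type*) [Group G] := Σ g : {g : G // g ≠ 1}, G ⧸ Subgroup.zpowers (g : G)

/-- The permutation of the index set induced by `x`. -/
def permJ (x : G) : Jt G ≃ Jt G where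
  toFun j := ⟨j.1, x⁻¹ • j.2⟩
  invFun j := ⟨j.1, x • j.2⟩
  left_inv j := by cases j; simp [smul_smul]
  right_inv j := by cases j; simp [smul_smul]

@[simp] lemma permJ_apply (x : G) (j : Jt G) : permJ x j = ⟨j.1, x⁻¹ • j.2⟩ := rfl

lemma key_mem (H : Subgroup G) (x : G) (u : G ⧸ H) :
    (u.out)⁻¹ * x * ((x⁻¹ • u).out) ∈ H := by
  have h : ((x⁻¹ * u.out : G) : G ⧸ H) = (((x⁻¹ • u).out : G) : G ⧸ H) := by
    rw [QuotientGroup.out_eq']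
    have : ((x⁻¹ * u.out : G) : G ⧸ H) = x⁻¹ • ((u.out : G) : G ⧸ H) := rfl
    rw [this, QuotientGroup.out_eq']
  have := QuotientGroup.eq.mp h
  simpa [mul_inv_rev, mul_assoc] using this

/-- The translation part of the action of `x`. -/
noncomputable def cvec (x : G) : Jt G → AddCircle (1 : ℝ) :=
  fun j => chi (j.1 : G) ((j.2.out)⁻¹ * x * ((x⁻¹ • j.2).out))

lemma cvec_cocycle [Finite G] (x y : G) (j : Jt G) :
    cvec (x * y) j = cvec x j + cvec y (permJ x j) := by
  obtain ⟨g, u⟩ := j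
  have hd : orderOf (g : G) ≠ 0 := (orderOf_pos (g : G)).ne'
  have hsm : (x * y)⁻¹ • u = y⁻¹ • (x⁻¹ • u) := by rw [mul_inv_rev, mul_smul]
  have hA : (u.out)⁻¹ * (x * y) * (((x * y)⁻¹ • u).out)
      = ((u.out)⁻¹ * x * ((x⁻¹ • u).out))
        * (((x⁻¹ • u).out)⁻¹ * y * ((y⁻¹ • (x⁻¹ • u)).out)) := by
    rw [hsm]; group
  show chi (g : G) _ = chi (g : G) _ + chi (g : G) _
  rw [hA, chi_mul _ _ _ hd (key_mem _ x u) (key_mem _ y (x⁻¹ • u))]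
  rfl

/-- The action of `x` on the torus indexed by `Jt G`. -/
noncomputable def rho0 (x : G) :
    (Jt G → AddCircle (1 : ℝ)) ≃ₜ (Jt G → AddCircle (1 : ℝ)) :=
  (reindexHomeo (permJ x).symm).trans (Homeomorph.addLeft (cvec x))

@[simp] lemma rho0_apply (x : G) (t : Jt G → AddCircle (1 : ℝ)) (j : Jt G) :
    rho0 x t j = cvec x j + t (permJ x j) := by
  simp [rho0, Homeomorph.trans_apply]

lemma rho0_mul [Finite G] (x y : G) : rho0 (x * y) = rho0 x * rho0 y := by
  apply Homeomorph.ext; intro t; funext j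
  rw [homeo_mul_apply]
  simp only [rho0_apply]
  have hperm : permJ y (permJ x j) = permJ (x * y) j := by
    cases j; simp [mul_inv_rev, mul_smul]
  rw [hperm, cvec_cocycle x y j, add_assoc]

lemma rho0_free [Finite G] (x : G) (t : Jt G → AddCircle (1 : ℝ))
    (h : rho0 x t = t) : x = 1 := by
  by_contra hx
  set g : {g : G // g ≠ 1} := ⟨x, hx⟩ with hg
  set u : G ⧸ Subgroup.zpowers x := ((1 : G) : G ⧸ Subgroup.zpowers x) with hu
  have hfix : x⁻¹ • u = u := by
    rw [hu]
    have : x⁻¹ • ((1 : G) : G ⧸ Subgroup.zpowers x) = ((x⁻¹ * 1 : G) : _) := rfl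
    rw [this]
    exact QuotientGroup.eq.mpr (by simpa using Subgroup.mem_zpowers x)
  set j₀ : Jt G := ⟨g, u⟩ with hj₀
  have hpj : permJ x j₀ = j₀ := by
    rw [hj₀, permJ_apply]
    exact Sigma.ext rfl (heq_of_eq hfix)
  have heval := congrFun h j₀
  rw [rho0_apply, hpj] at heval
  have hcz : cvec x j₀ = 0 := by
    have := heval
    nth_rewrite 2 [← zero_add (t j₀)] at this
    exact add_right_cancel this
  -- compute cvec x j₀ = chi x x
  have hrmem : u.out ∈ Subgroup.zpowers x := by
    have : ((u.out : G) : G ⧸ Subgroup.zpowers x) = ((1 : G) : _) := by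
      rw [QuotientGroup.out_eq']
    have h2 := QuotientGroup.eq.mp this.symm
    simpa using h2
  obtain ⟨k, hk⟩ := Subgroup.mem_zpowers_iff.mp hrmem
  have helem : (u.out)⁻¹ * x * ((x⁻¹ • u).out) = x := by
    rw [hfix, ← hk]; group
  have hcx : cvec x j₀ = chi x x := by
    rw [cvec]; rw [hj₀]
    simp only []
    rw [helem]
  have hord : 2 ≤ orderOf x := by
    rcases Nat.lt_or_ge (orderOf x) 2 with h2 | h2
    · interval_cases h : orderOf x
      · exact absurd h (orderOf_pos x).ne'
      · exact absurd (orderOf_eq_one_iff.mp h) hx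
    · exact h2
  exact chi_self x hord (hcx ▸ hcz)

end Main

/-- Every finite group admits a free continuous action on a
finite-dimensional torus: there are `n : ℕ` and a homomorphism from `G` to the group of
self-homeomorphisms of the torus `Fin n → AddCircle (1 : ℝ)` whose associated action is
free. -/
theorem statement1 (G : Type*) [Group G] [Finite G] :
    ∃ (n : ℕ) (ρ : G →* ((Fin n → AddCircle (1 : ℝ)) ≃ₜ (Fin n → AddCircle (1 : ℝ)))),
      ∀ (g : G) (t : Fin n → AddCircle (1 : ℝ)), ρ g t = t → g = 1 := by
  classical
  letI : Fintype (Jt G) := Fintype.ofFinite _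
  set n := Fintype.card (Jt G) with hn
  let E : Jt G ≃ Fin n := Fintype.equivFin _
  let H := reindexHomeo (A := AddCircle (1 : ℝ)) E
  refine ⟨n, (conjHom H).comp (MonoidHom.mk' rho0 rho0_mul), ?_⟩
  intro g t hgt
  apply rho0_free g (H.symm t)
  have : H (rho0 g (H.symm t)) = t := hgt
  apply H.injective
  rw [this]
  exact (H.apply_symm_apply t).symm
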